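/- For every integer c ≥ 1, the c-color gadget D_c admits a c-gel, i.e., a good edge-labeling taking at most c distinct values. -/

import Mathlib

/-- A walk is *increasing* with respect to an edge-labeling if the sequence of labels of its
edges, traversed from the first endpoint to the last, is non-decreasing. -/
def IsIncreasing {V : Type*} (G : SimpleGraph V) (lab : Sym2 V → ℝ) {x y : V}
    (p : G.Walk x y) : Prop :=
  (p.edges.map lab).Chain' (· ≤ ·)

/-- An edge-labeling is *good* if for every ordered pair `(x, y)` of vertices there do not
exist two distinct increasing paths from `x` to `y`. -/
def IsGoodLabeling {V : Type*} (G : SimpleGraph V) (lab : Sym2 V → ℝ) : Prop :=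
  ∀ (x y : V) (p q : G.Walk x y), p.IsPath → q.IsPath →
    IsIncreasing G lab p → IsIncreasing G lab q → p = q

/-- The vertices of the `c`-color gadget: `Sum.inl ()` is the vertex `v`, `Sum.inr (Sum.inl i)`
is the vertex `v_i`, and `Sum.inr (Sum.inr p)` with `p.1 < p.2` is the vertex `v_{i,j}`. -/
def DVert (c : ℕ) : Type :=
  Unit ⊕ Fin c ⊕ {p : Fin c × Fin c // p.1 < p.2}

/-- The `c`-color gadget `D_c`, with edges `v v_i` for each `i`, and `v_i v_{i,j}`,
`v_j v_{i,j}` for each `i < j`. -/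
def DGadget (c : ℕ) : SimpleGraph (DVert c) :=
  SimpleGraph.fromRel (fun a b =>
    (∃ i : Fin c, a = Sum.inl () ∧ b = Sum.inr (Sum.inl i)) ∨
    (∃ (i : Fin c) (p : {p : Fin c × Fin c // p.1 < p.2}),
      a = Sum.inr (Sum.inl i) ∧ b = Sum.inr (Sum.inr p) ∧ (p.val.1 = i ∨ p.val.2 = i)))

/-!
Send `v`, `v_i`, `v_{i,j}` to the subsets `∅`, `{i}`, `{i, j}` of `{0, …, c - 1}`. Adjacent
vertices then differ in exactly one element, and labelling each edge by that element places `D_c`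
in the hypercube with every edge labelled by its direction. Distinct edges at a vertex get
distinct labels, so the labels along an increasing path strictly increase and every coordinate
is flipped at most once: the set of labels of an increasing path from `x` to `y` is `x ∆ y`.
This fixes the label sequence, and a walk is determined by its start and its labels.
-/

theorem isIncreasing_iff {V : Type*} {G : SimpleGraph V} {lab : Sym2 V → ℝ} {x y : V}
    {p : G.Walk x y} : IsIncreasing G lab p ↔ (p.edges.map lab).IsChain (· ≤ ·) :=
  Iff.rfl

namespace SimpleGraph

variable {V : Type*} {G : SimpleGraph V}

structure IsHypercubeLabeling (G : SimpleGraph V) (lab : Sym2 V → ℝ) (f : V → Finset ℝ) :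
    Prop where
  injective : Function.Injective f
  symmDiff_eq_of_adj : ∀ ⦃x y⦄, G.Adj x y → symmDiff (f x) (f y) = {lab s(x, y)}

namespace IsHypercubeLabeling

variable {lab : Sym2 V → ℝ} {f : V → Finset ℝ}

theorem eq_of_adj_of_lab_eq (h : G.IsHypercubeLabeling lab f) {x a b : V} (ha : G.Adj x a)
    (hb : G.Adj x b) (hab : lab s(x, a) = lab s(x, b)) : a = b := by
  apply h.injective
  rw [← symmDiff_symmDiff_cancel_left (f x) (f a), ← symmDiff_symmDiff_cancel_left (f x) (f b),
    h.symmDiff_eq_of_adj ha, h.symmDiff_eq_of_adj hb, hab]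

theorem walk_eq_of_map_edges_eq (h : G.IsHypercubeLabeling lab f) {x y : V} :
    ∀ p q : G.Walk x y, p.edges.map lab = q.edges.map lab → p = q
  | .nil, .nil, _ => rfl
  | .nil, .cons _ _, hpq => by simp at hpq
  | .cons _ _, .nil, hpq => by simp at hpq
  | .cons ha p, .cons hb q, hpq => by
    simp only [Walk.edges_cons, List.map_cons, List.cons.injEq] at hpq
    obtain rfl := h.eq_of_adj_of_lab_eq ha hb hpq.1
    rw [h.walk_eq_of_map_edges_eq p q hpq.2]

theorem isChain_lt_map_edges (h : G.IsHypercubeLabeling lab f) {x y : V} :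
    ∀ p : G.Walk x y, p.IsPath → IsIncreasing G lab p → (p.edges.map lab).IsChain (· < ·)
  | .nil, _, _ => by simp
  | .cons _ .nil, _, _ => by simp
  | .cons ha (.cons hb p), hp, hinc => by
    simp only [isIncreasing_iff, Walk.edges_cons, List.map_cons, List.isChain_cons_cons] at hinc ⊢
    refine ⟨hinc.1.lt_of_ne fun hlab => ?_, h.isChain_lt_map_edges _ hp.of_cons hinc.2⟩
    obtain rfl := h.eq_of_adj_of_lab_eq ha.symm hb (by rwa [Sym2.eq_swap])
    exact ((Walk.cons_isPath_iff _ _).1 hp).2 (by simp)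

theorem symmDiff_eq_toFinset (h : G.IsHypercubeLabeling lab f) {x y : V} :
    ∀ p : G.Walk x y, (p.edges.map lab).Pairwise (· < ·) →
      symmDiff (f x) (f y) = (p.edges.map lab).toFinset
  | .nil, _ => by simp
  | .cons (v := a) ha p, hp => by
    rw [Walk.edges_cons, List.map_cons, List.pairwise_cons] at hp
    have hdisj : Disjoint {lab s(x, a)} (p.edges.map lab).toFinset := by
      simpa using fun hmem => (hp.1 _ hmem).false
    rw [Walk.edges_cons, List.map_cons, List.toFinset_cons,
      ← symmDiff_symmDiff_cancel_left (f a) (f y), ← symmDiff_assoc, h.symmDiff_eq_of_adj ha,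
      h.symmDiff_eq_toFinset p hp.2, hdisj.symmDiff_eq_sup]
    rfl

theorem isGoodLabeling (h : G.IsHypercubeLabeling lab f) : IsGoodLabeling G lab := by
  intro x y p q hp hq hip hiq
  have hp' := List.isChain_iff_pairwise.1 (h.isChain_lt_map_edges p hp hip)
  have hq' := List.isChain_iff_pairwise.1 (h.isChain_lt_map_edges q hq hiq)
  refine h.walk_eq_of_map_edges_eq p q (hp'.eq_of_mem_iff hq' fun t => ?_)
  rw [← List.mem_toFinset, ← List.mem_toFinset, ← h.symmDiff_eq_toFinset p hp',
    ← h.symmDiff_eq_toFinset q hq']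

end IsHypercubeLabeling

/-- On an edge whose endpoints differ in a single coordinate `t`, the sum is `t`. -/
noncomputable def hypercubeLabel (f : V → Finset ℝ) : Sym2 V → ℝ :=
  Sym2.lift ⟨fun x y => ∑ t ∈ symmDiff (f x) (f y), t, fun x y => by simp only [symmDiff_comm]⟩

theorem hypercubeLabel_eq {f : V → Finset ℝ} {x y : V} {t : ℝ}
    (h : symmDiff (f x) (f y) = {t}) : hypercubeLabel f s(x, y) = t := by
  simp [hypercubeLabel, h]

theorem isHypercubeLabeling_hypercubeLabel {f : V → Finset ℝ} (hf : Function.Injective f)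
    (hG : ∀ ⦃x y⦄, G.Adj x y → ∃ t, symmDiff (f x) (f y) = {t}) :
    G.IsHypercubeLabeling (hypercubeLabel f) f where
  injective := hf
  symmDiff_eq_of_adj x y hxy := by
    obtain ⟨t, ht⟩ := hG hxy
    rw [ht, hypercubeLabel_eq ht]

end SimpleGraph

theorem Finset.singleton_symmDiff_pair {α : Type*} [DecidableEq α] {a b : α} (h : a ≠ b) :
    symmDiff {a} {a, b} = ({b} : Finset α) := by
  ext t
  simp only [Finset.mem_symmDiff, Finset.mem_singleton, Finset.mem_insert]
  grind

namespace DGadget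

open SimpleGraph

variable {c : ℕ}

noncomputable def coord (c : ℕ) : DVert c → Finset ℝ
  | Sum.inl _ => ∅
  | Sum.inr (Sum.inl i) => {((i : ℕ) : ℝ)}
  | Sum.inr (Sum.inr p) => {((p.1.1 : ℕ) : ℝ), ((p.1.2 : ℕ) : ℝ)}

theorem coord_injective : Function.Injective (coord c) := by
  rintro (⟨⟩ | i | ⟨⟨a, b⟩, hab⟩) (⟨⟩ | j | ⟨⟨a', b'⟩, hab'⟩) h <;>
    simp only [coord, Finset.ext_iff, Finset.mem_insert, Finset.mem_singleton,
      Finset.notMem_empty] at h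
  · rfl
  · exact ((h _).2 rfl).elim
  · exact ((h _).2 (Or.inl rfl)).elim
  · exact ((h _).1 rfl).elim
  · obtain rfl : i = j := Fin.ext (by exact_mod_cast (h ((i : ℕ) : ℝ)).1 rfl)
    rfl
  · have ha' := (h ((a' : ℕ) : ℝ)).2 (Or.inl rfl)
    have hb' := (h ((b' : ℕ) : ℝ)).2 (Or.inr rfl)
    simp only [Nat.cast_inj, Fin.val_inj] at ha' hb'
    exact absurd hab' (by simp [ha', hb'])
  · exact ((h _).1 (Or.inl rfl)).elim
  · have ha := (h ((a : ℕ) : ℝ)).1 (Or.inl rfl)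
    have hb := (h ((b : ℕ) : ℝ)).1 (Or.inr rfl)
    simp only [Nat.cast_inj, Fin.val_inj] at ha hb
    exact absurd hab (by simp [ha, hb])
  · have ha := (h ((a : ℕ) : ℝ)).1 (Or.inl rfl)
    have hb := (h ((b : ℕ) : ℝ)).1 (Or.inr rfl)
    have ha' := (h ((a' : ℕ) : ℝ)).2 (Or.inl rfl)
    simp only [Nat.cast_inj, Fin.val_inj] at ha hb ha'
    obtain ⟨rfl, rfl⟩ : a = a' ∧ b = b' := by grind
    rfl

theorem exists_symmDiff_coord_eq_singleton {x y : DVert c} (h : (DGadget c).Adj x y) :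
    ∃ i : Fin c, symmDiff (coord c x) (coord c y) = {((i : ℕ) : ℝ)} := by
  obtain ⟨-, h | h⟩ := h <;> [skip; rw [symmDiff_comm]] <;>
    rcases h with ⟨i, rfl, rfl⟩ | ⟨_, ⟨⟨a, b⟩, hab⟩, rfl, rfl, rfl | rfl⟩
  all_goals first
    | exact ⟨i, by simp [coord]⟩
    | have hab : ((a : ℕ) : ℝ) ≠ (b : ℕ) := by exact_mod_cast Fin.val_ne_of_ne hab.ne
      first
      | exact ⟨b, Finset.singleton_symmDiff_pair hab⟩
      | exact ⟨a, show symmDiff {((b : ℕ) : ℝ)} {((a : ℕ) : ℝ), ((b : ℕ) : ℝ)} = _ by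
          rw [Finset.pair_comm]; exact Finset.singleton_symmDiff_pair hab.symm⟩

theorem isHypercubeLabeling :
    (DGadget c).IsHypercubeLabeling (hypercubeLabel (coord c)) (coord c) :=
  isHypercubeLabeling_hypercubeLabel coord_injective fun _ _ hxy => by
    obtain ⟨i, hi⟩ := exists_symmDiff_coord_eq_singleton hxy
    exact ⟨_, hi⟩

theorem ncard_image_edgeSet_le :
    (hypercubeLabel (coord c) '' (DGadget c).edgeSet).ncard ≤ c := by
  have hsub : hypercubeLabel (coord c) '' (DGadget c).edgeSet ⊆
      Set.range fun i : Fin c => ((i : ℕ) : ℝ) := by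
    rintro _ ⟨⟨x, y⟩, hxy, rfl⟩
    obtain ⟨i, hi⟩ := exists_symmDiff_coord_eq_singleton hxy
    exact ⟨i, (hypercubeLabel_eq hi).symm⟩
  calc _ ≤ (Set.range fun i : Fin c => ((i : ℕ) : ℝ)).ncard :=
        Set.ncard_le_ncard hsub (Set.finite_range _)
    _ = c := by
      rw [Set.ncard_range_of_injective fun i j hij => Fin.ext (by exact_mod_cast hij),
        Nat.card_eq_fintype_card, Fintype.card_fin]

end DGadget

theorem color_gadget_cgel_general (c : ℕ) :
    ∃ lab : Sym2 (DVert c) → ℝ,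
      IsGoodLabeling (DGadget c) lab ∧ (lab '' (DGadget c).edgeSet).ncard ≤ c :=
  ⟨_, DGadget.isHypercubeLabeling.isGoodLabeling, DGadget.ncard_image_edgeSet_le⟩

/-- For every `c ≥ 1`, the `c`-color gadget `D_c` admits a `c`-gel, i.e. a good
edge-labeling taking at most `c` distinct values. -/
theorem color_gadget_cgel (c : ℕ) (hc : 1 ≤ c) :
    ∃ lab : Sym2 (DVert c) → ℝ,
      IsGoodLabeling (DGadget c) lab ∧ (lab '' (DGadget c).edgeSet).ncard ≤ c :=
  color_gadget_cgel_general c
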